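/- Let X be a complex Banach space and L(X) the Banach algebra of bounded linear operators on X. Let M = [[A, B], [C, D]] ∈ M₂(L(X)) and suppose A and D have strongly Drazin inverses. If D^D C B D^D = 0, D^D C A = 0, D^π C B = 0 and D^π C A = 0, where D^D is the Drazin inverse of D and D^π = I − D·D^D, then M has a Hirano inverse in M₂(L(X)). -/

import Mathlib

/-- `a` has a Hirano inverse: there exists `z` with `az = za`, `z = zaz`,
and `a^2 - az` nilpotent. -/
def HasHiranoInverse {R : Type*} [Ring R] (a : R) : Prop :=
  ∃ z : R, a * z = z * a ∧ z = z * a * z ∧ IsNilpotent (a ^ 2 - a * z)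

/-- `a` has a strongly Drazin inverse: there exists `z` with `az = za`, `z = zaz`,
and `a - az` nilpotent. -/
def HasStronglyDrazinInverse {R : Type*} [Ring R] (a : R) : Prop :=
  ∃ z : R, a * z = z * a ∧ z = z * a * z ∧ IsNilpotent (a - a * z)

/-!
An element `a` has a Hirano inverse as soon as `a - a³` is nilpotent: in the commutative
subring generated by `a`, the image of `a²` modulo the nilradical is idempotent, and a lift `e`
of it gives the inverse `a e (1 + a² - e)⁻¹`. Strongly Drazin invertible elements have
`a - a³` nilpotent, and this property survives conjugation by units and perturbations `a + g`
with `g aᵏ g = 0` for all `k`.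

The matrix `M = [[A, B], [C, D]]` is similar, via `[[1, 0], [-Dᴰ C, 1]]`, to `T + N` with
`T = [[A - B Dᴰ C, B], [0, D + Dᴰ C B]]` and `N = [[0, 0], [D^π C, 0]]`. The hypotheses give
`N T = 0 = N²`, and make the diagonal entries of `T` admissible perturbations of `A` and `D`,
so `M - M³` is nilpotent.
-/

theorem SemiconjBy.isNilpotent {M : Type*} [MonoidWithZero M] {u x y : M} (h : SemiconjBy u x y)
    (hu : IsUnit u) (hx : IsNilpotent x) : IsNilpotent y := by
  obtain ⟨n, hn⟩ := hx
  refine ⟨n, ?_⟩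
  have := (h.pow_right n).eq
  rwa [hn, mul_zero, eq_comm, hu.mul_left_eq_zero] at this

theorem HasHiranoInverse.map {R S F : Type*} [Ring R] [Ring S] [FunLike F R S]
    [RingHomClass F R S] (f : F) {a : R} (h : HasHiranoInverse a) : HasHiranoInverse (f a) := by
  obtain ⟨z, hcomm, hz, hnil⟩ := h
  refine ⟨f z, ?_, ?_, ?_⟩
  · rw [← map_mul, hcomm, map_mul]
  · rw [← map_mul, ← map_mul, ← hz]
  · simpa only [map_sub, map_pow, map_mul] using hnil.map f

theorem hasHiranoInverse_of_isNilpotent_sub_pow_three_comm {R : Type*} [CommRing R] {a : R}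
    (h : IsNilpotent (a - a ^ 3)) : HasHiranoInverse a := by
  obtain ⟨e, he, hea⟩ := exists_isIdempotentElem_eq_of_ker_isNilpotent
    (Ideal.Quotient.mk (nilradical R)) (fun x hx ↦ by simpa [mem_nilradical] using hx)
    (Ideal.Quotient.mk _ (a ^ 2)) ⟨_, rfl⟩ <| by
      rw [IsIdempotentElem, ← map_mul, Ideal.Quotient.eq]
      convert (nilradical R).mul_mem_left (-a) (mem_nilradical.mpr h) using 1
      ring
  have hν : IsNilpotent (a ^ 2 - e) := by
    rw [← mem_nilradical, ← Ideal.Quotient.eq, hea]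
  obtain ⟨u, hu⟩ := hν.isUnit_one_add
  have hae : a * (a * e * ↑u⁻¹) = e := by
    have : a ^ 2 * e = e * u := by
      rw [hu]
      linear_combination he.eq
    rw [← mul_assoc, ← mul_assoc, ← pow_two, this, Units.mul_inv_cancel_right]
  refine ⟨a * e * ↑u⁻¹, mul_comm _ _, ?_, ?_⟩
  · rw [mul_comm (a * e * _) a, hae]
    linear_combination (-(a * ↑u⁻¹)) * he.eq
  · rwa [hae]

section Ring

variable {R : Type*} [Ring R]

theorem hasHiranoInverse_of_isNilpotent_sub_pow_three {a : R}
    (h : IsNilpotent (a - a ^ 3)) : HasHiranoInverse a := by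
  let S := Subring.closure {a}
  have : IsMulCommutative S := Subring.isMulCommutative_closure (by simp)
  let a' : S := ⟨a, Subring.subset_closure rfl⟩
  have h' : IsNilpotent (a' - a' ^ 3) := by
    rwa [← IsNilpotent.map_iff (f := S.subtype) Subtype.val_injective]
  open scoped IsMulCommutative in
  exact (hasHiranoInverse_of_isNilpotent_sub_pow_three_comm h').map S.subtype

theorem HasStronglyDrazinInverse.isNilpotent_sub_pow_three {a : R}
    (h : HasStronglyDrazinInverse a) : IsNilpotent (a - a ^ 3) := by
  obtain ⟨z, hcomm, hz, hnil⟩ := h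
  have he : IsIdempotentElem (a * z) := by
    rw [IsIdempotentElem, mul_assoc, ← mul_assoc z, ← hz]
  set e := a * z
  have hae : Commute a e := (Commute.refl a).mul_right hcomm
  have hsq : a - a ^ 2 = (a - e) * (1 - e - a) := by
    calc a - a ^ 2 = a - a * e - a ^ 2 - e + e * e + e * a := by
          rw [he.eq, ← hae.eq]; noncomm_ring
      _ = (a - e) * (1 - e - a) := by noncomm_ring
  have hsq_nil : IsNilpotent (a - a ^ 2) := by
    refine hsq ▸ Commute.isNilpotent_mul_right ?_ hnil
    exact (((Commute.one_right a).sub_right hae).sub_right (Commute.refl a)).sub_left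
      (((Commute.one_right e).sub_right (Commute.refl e)).sub_right hae.symm)
  have hcube : a - a ^ 3 = (a - a ^ 2) * (1 + a) := by noncomm_ring
  have ha1 : Commute a (1 + a) := (Commute.one_right a).add_right (Commute.refl a)
  exact hcube ▸ Commute.isNilpotent_mul_right (ha1.sub_left (ha1.pow_left 2)) hsq_nil

theorem isNilpotent_add_of_mul_pow_mul_eq_zero {x y : R} (hx : IsNilpotent x)
    (hy : ∀ k, y * x ^ k * y = 0) : IsNilpotent (x + y) := by
  obtain ⟨p, hp⟩ := hx
  have hys : ∀ n, y * (x + y) ^ n = y * x ^ n := by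
    intro n
    induction n with
    | zero => simp
    | succ n ih => rw [pow_succ, ← mul_assoc, ih, mul_add, hy, add_zero, mul_assoc, ← pow_succ]
  have hshift : ∀ k, (x + y) ^ (p + k) = x ^ k * (x + y) ^ p := by
    intro k
    induction k with
    | zero => simp
    | succ k ih =>
      rw [← add_assoc, pow_succ', add_mul, hys, pow_add x p k, hp, zero_mul, mul_zero, add_zero,
        ih, ← mul_assoc, ← pow_succ']
  exact ⟨p + p, by rw [hshift, hp, zero_mul]⟩

theorem mul_pow_mul_eq_zero_of_mul_eq_zero {a h : R} (hha : h * a = 0) (hh : h * h = 0) (k : ℕ) :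
    h * a ^ k * h = 0 := by
  cases k with
  | zero => rwa [pow_zero, mul_one]
  | succ k => rw [pow_succ', ← mul_assoc, hha, zero_mul, zero_mul]

theorem mul_mul_eq_zero_of_mem_closure {a g p : R} (hg : ∀ k, g * a ^ k * g = 0)
    (hp : p ∈ Subring.closure {a}) : g * p * g = 0 := by
  rw [Subring.mem_closure_iff] at hp
  induction hp using AddSubgroup.closure_induction with
  | mem q hq =>
    obtain ⟨k, rfl⟩ := Submonoid.mem_closure_singleton.mp hq
    exact hg k
  | zero => rw [mul_zero, zero_mul]
  | add q r _ _ hq hr => rw [mul_add, add_mul, hq, hr, add_zero]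
  | neg q _ hq => rw [mul_neg, neg_mul, hq, neg_zero]

theorem isNilpotent_sub_pow_three_add {a g : R} (ha : IsNilpotent (a - a ^ 3))
    (hg : ∀ k, g * a ^ k * g = 0) : IsNilpotent ((a + g) - (a + g) ^ 3) := by
  set S := Subring.closure {a}
  have haS : a ∈ S := Subring.subset_closure rfl
  have hsand : ∀ u v w u' v', v ∈ S → w ∈ S → u' ∈ S →
      u * g * v * w * (u' * g * v') = 0 := by
    intro u v w u' v' hv hw hu'
    calc u * g * v * w * (u' * g * v') = u * (g * (v * w * u') * g) * v' := by noncomm_ring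
      _ = 0 := by
        rw [mul_mul_eq_zero_of_mem_closure hg (mul_mem (mul_mem hv hw) hu'), mul_zero, zero_mul]
  have hgg : g * g = 0 := by simpa using hg 0
  have hgag : g * a * g = 0 := by simpa using hg 1
  -- The unit factors give every term of the perturbation the shape `u * g * v` of `hsand`.
  have hsplit : (a + g) - (a + g) ^ 3 =
      (a - a ^ 3) + (1 * g * 1 - a ^ 2 * g * 1 - a * g * a - 1 * g * a ^ 2) := by
    have : (a + g) - (a + g) ^ 3 = (a - a ^ 3) + (g - a ^ 2 * g - a * g * a - g * a ^ 2)
        - (a * (g * g) + g * a * g + g * g * a + g * g * g) := by noncomm_ring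
    rw [this, hgg, hgag]
    noncomm_ring
  rw [hsplit]
  refine isNilpotent_add_of_mul_pow_mul_eq_zero ha fun k => ?_
  have h1 : (1 : R) ∈ S := one_mem S
  have h2 : a ^ 2 ∈ S := pow_mem haS 2
  have hk : (a - a ^ 3) ^ k ∈ S := pow_mem (sub_mem haS (pow_mem haS 3)) k
  simp (disch := assumption) only [sub_mul, mul_sub, hsand, sub_self]

theorem isNilpotent_sub_pow_three_sub_mul {a b c : R} (ha : IsNilpotent (a - a ^ 3))
    (hca : c * a = 0) (hcbc : c * b * c = 0) :
    IsNilpotent ((a - b * c) - (a - b * c) ^ 3) := by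
  rw [sub_eq_add_neg a]
  refine isNilpotent_sub_pow_three_add ha (mul_pow_mul_eq_zero_of_mul_eq_zero ?_ ?_)
  · rw [neg_mul, mul_assoc, hca, mul_zero, neg_zero]
  · rw [neg_mul_neg, mul_assoc, ← mul_assoc c, hcbc, mul_zero]

theorem isNilpotent_sub_pow_three_add_mul {d e x : R} (hd : IsNilpotent (d - d ^ 3))
    (hde : Commute d e) (hexe : e * x * e = 0) :
    IsNilpotent ((d + e * x) - (d + e * x) ^ 3) := by
  refine isNilpotent_sub_pow_three_add hd fun k => ?_
  calc e * x * d ^ k * (e * x) = e * x * (d ^ k * e) * x := by simp only [mul_assoc]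
    _ = e * x * e * (d ^ k * x) := by rw [(hde.pow_left k).eq]; simp only [mul_assoc]
    _ = 0 := by rw [hexe, zero_mul]

end Ring

namespace Matrix

variable {R : Type*} [Ring R]

theorem isNilpotent_diagonal {n : Type*} [Fintype n] [DecidableEq n] {v : n → R}
    (h : ∀ i, IsNilpotent (v i)) : IsNilpotent (diagonal v) := by
  choose N hN using h
  refine ⟨Finset.univ.sup N, ?_⟩
  rw [diagonal_pow, ← diagonal_zero]
  congr 1
  ext i
  exact pow_eq_zero_of_le (Finset.le_sup (Finset.mem_univ i)) (hN i)

theorem isNilpotent_sub_pow_three_of_upperTriangular {a b d : R} (ha : IsNilpotent (a - a ^ 3))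
    (hd : IsNilpotent (d - d ^ 3)) :
    IsNilpotent (!![a, b; 0, d] - !![a, b; 0, d] ^ 3) := by
  have hsplit : !![a, b; 0, d] = diagonal ![a, d] + !![0, b; 0, 0] := by
    rw [diagonal_vec2]; ext i j; fin_cases i <;> fin_cases j <;> simp
  have hdiag : IsNilpotent (diagonal ![a, d] - diagonal ![a, d] ^ 3) := by
    rw [diagonal_pow, diagonal_sub]
    exact isNilpotent_diagonal (Fin.forall_fin_two.mpr ⟨ha, hd⟩)
  rw [hsplit]
  refine isNilpotent_sub_pow_three_add hdiag fun k => ?_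
  rw [diagonal_pow, diagonal_fin_two, mul_fin_two, mul_fin_two]
  simp only [mul_zero, zero_mul, add_zero, zero_add]
  exact (eta_fin_two 0).symm

theorem isNilpotent_sub_pow_three_fin_two {a b c d : R} (ha : IsNilpotent (a - a ^ 3))
    (hd : IsNilpotent (d - d ^ 3)) (hca : c * a = 0) (hcb : c * b = 0) :
    IsNilpotent (!![a, b; c, d] - !![a, b; c, d] ^ 3) := by
  have hsplit : !![a, b; c, d] = !![a, b; 0, d] + !![0, 0; c, 0] := by
    ext i j; fin_cases i <;> fin_cases j <;> simp
  rw [hsplit]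
  refine isNilpotent_sub_pow_three_add (isNilpotent_sub_pow_three_of_upperTriangular ha hd)
    (mul_pow_mul_eq_zero_of_mul_eq_zero ?_ ?_)
  · ext i j; fin_cases i <;> fin_cases j <;> simp [hca, hcb]
  · ext i j; fin_cases i <;> fin_cases j <;> simp

theorem isUnit_lowerUnitriangular_fin_two (c : R) : IsUnit !![1, 0; c, 1] :=
  ⟨⟨!![1, 0; c, 1], !![1, 0; -c, 1], by simp [one_fin_two], by simp [one_fin_two]⟩, rfl⟩

theorem semiconjBy_lowerUnitriangular_fin_two (a b c d x : R) :
    SemiconjBy !![1, 0; -x, 1] !![a - b * x, b; c - d * x + x * (a - b * x), d + x * b]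
      !![a, b; c, d] := by
  rw [SemiconjBy, mul_fin_two, mul_fin_two]
  congr 3 <;> noncomm_ring

end Matrix

variable {X : Type*} [NormedAddCommGroup X] [NormedSpace ℂ X] [CompleteSpace X]

theorem hirano_perturb_cor211 (A B C D DD : X →L[ℂ] X)
    (hA : HasStronglyDrazinInverse A)
    (hDD : D * DD = DD * D ∧ DD = DD * D * DD ∧ IsNilpotent (D - D * DD))
    (h1 : DD * C * B * DD = 0)
    (h2 : DD * C * A = 0)
    (h3 : (1 - D * DD) * C * B = 0)
    (h4 : (1 - D * DD) * C * A = 0) :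
    HasHiranoInverse (!![A, B; C, D] : Matrix (Fin 2) (Fin 2) (X →L[ℂ] X)) := by
  set A₁ := A - B * (DD * C)
  set D₁ := D + DD * (C * B)
  have hcbc : DD * C * B * (DD * C) = 0 := by rw [← mul_assoc, h1, zero_mul]
  have hA₁ : IsNilpotent (A₁ - A₁ ^ 3) :=
    isNilpotent_sub_pow_three_sub_mul hA.isNilpotent_sub_pow_three h2 hcbc
  have hD : HasStronglyDrazinInverse D := ⟨DD, hDD⟩
  have hD₁ : IsNilpotent (D₁ - D₁ ^ 3) :=
    isNilpotent_sub_pow_three_add_mul hD.isNilpotent_sub_pow_three hDD.1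
      (by rw [← mul_assoc]; exact h1)
  have hC₁A₁ : (1 - D * DD) * C * A₁ = 0 := by
    rw [mul_sub, h4, ← mul_assoc, h3, zero_mul, sub_zero]
  have hC₁ : C - D * (DD * C) + DD * C * A₁ = (1 - D * DD) * C := by
    rw [mul_sub, h2, ← mul_assoc (DD * C) B, hcbc, sub_zero, add_zero, sub_mul, one_mul,
      mul_assoc]
  have hconj := Matrix.semiconjBy_lowerUnitriangular_fin_two A B C D (DD * C)
  rw [hC₁, mul_assoc DD C B] at hconj
  have hM₁ := Matrix.isNilpotent_sub_pow_three_fin_two hA₁ hD₁ hC₁A₁ h3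
  exact hasHiranoInverse_of_isNilpotent_sub_pow_three <| (hconj.sub_right (hconj.pow_right 3))
    |>.isNilpotent (Matrix.isUnit_lowerUnitriangular_fin_two _) hM₁
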